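/- Let C be a nonempty closed convex subset of a real Hilbert space H, let ρ > 0, and define the abstract Huber function h : H → ℝ by h(x) = ρ d_C(x) − ρ²/2 if d_C(x) > ρ and h(x) = d_C(x)²/2 if d_C(x) ≤ ρ. Let γ > 0 and x ∈ H. Then prox_{γh} x = x + (γρ/d_C(x)) (proj_C x − x) if d_C(x) > (γ+1)ρ, and prox_{γh} x = (1/(γ+1)) (x + γ proj_C x) if d_C(x) ≤ (γ+1)ρ. -/

import Mathlib

/-!
`h = huber ρ ∘ d_C`, where `huber ρ` is convex on `ℝ` and nondecreasing on `[0, ∞)` and `d_C` is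
convex, so `γ h + ‖x - ·‖² / 2` is strictly convex and has at most one minimizer. Since
`|d_C x - d_C y| ≤ ‖x - y‖`, with equality on the segment from `x` to `proj_C x`, the objective is
bounded below by the scalar problem `min_s γ huber ρ s + (d_C x - s)² / 2`. Its minimizer
(`d_C x - γρ` or `d_C x / (γ + 1)`) is the distance to `C` of a point of that segment, which
therefore attains the bound.
-/

open Metric Set

noncomputable def huber (ρ t : ℝ) : ℝ := if ρ < t then ρ * t - ρ ^ 2 / 2 else t ^ 2 / 2

section Huber

variable {ρ : ℝ}

lemma huber_mono (hρ : 0 ≤ ρ) {s t : ℝ} (hs : 0 ≤ s) (hst : s ≤ t) : huber ρ s ≤ huber ρ t := by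
  unfold huber
  split_ifs <;> nlinarith

lemma huber_midpoint_le (a b : ℝ) :
    huber ρ ((a + b) / 2) ≤ (huber ρ a + huber ρ b) / 2 := by
  unfold huber
  split_ifs
  · linarith
  · nlinarith [sq_nonneg (b - ρ)]
  · nlinarith [sq_nonneg (a - ρ)]
  · linarith
  · linarith
  · nlinarith [mul_nonneg (by linarith : (0:ℝ) ≤ 2 * ρ - a - b)
      (by linarith : (0:ℝ) ≤ 3 * a - b - 2 * ρ)]
  · nlinarith [mul_nonneg (by linarith : (0:ℝ) ≤ 2 * ρ - a - b)
      (by linarith : (0:ℝ) ≤ 3 * b - a - 2 * ρ)]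
  · nlinarith [sq_nonneg (a - b)]

variable {γ d : ℝ}

lemma isMinOn_huber_prox_of_lt (hγ : 0 ≤ γ) (hd : (γ + 1) * ρ < d) :
    IsMinOn (fun s => γ * huber ρ s + (d - s) ^ 2 / 2) univ (d - γ * ρ) := by
  intro s _
  have hval : huber ρ (d - γ * ρ) = ρ * (d - γ * ρ) - ρ ^ 2 / 2 := if_pos (by linarith)
  simp only [mem_ofPred_eq, hval, sub_sub_cancel]
  unfold huber
  split_ifs
  · nlinarith [sq_nonneg (d - s - γ * ρ)]
  · nlinarith [sq_nonneg (d - (γ + 1) * ρ), sq_nonneg (ρ - s),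
      mul_nonneg (by linarith : (0:ℝ) ≤ ρ - s) (by linarith : (0:ℝ) ≤ d - (γ + 1) * ρ),
      mul_nonneg hγ (sq_nonneg (ρ - s))]

lemma isMinOn_huber_prox_of_le (hγ : 0 ≤ γ) (hd : d ≤ (γ + 1) * ρ) :
    IsMinOn (fun s => γ * huber ρ s + (d - s) ^ 2 / 2) univ (d / (γ + 1)) := by
  intro s _
  have hγ1 : 0 < γ + 1 := by linarith
  have hval : γ * huber ρ (d / (γ + 1)) + (d - d / (γ + 1)) ^ 2 / 2
      = γ * d ^ 2 / (2 * (γ + 1)) := by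
    rw [huber, if_neg (not_lt.2 ((div_le_iff₀ hγ1).2 (by linarith)))]
    field_simp
    ring
  simp only [mem_ofPred_eq, hval]
  rw [div_le_iff₀ (by positivity)]
  unfold huber
  split_ifs
  · nlinarith [sq_nonneg ((γ + 1) * ρ - d), sq_nonneg (s - ρ),
      mul_nonneg (by linarith : (0:ℝ) ≤ s - ρ) (by linarith : (0:ℝ) ≤ (γ + 1) * ρ - d),
      mul_nonneg hγ (sq_nonneg (s - ρ)),
      mul_nonneg (mul_nonneg hγ hγ1.le)
        (mul_nonneg (by linarith : (0:ℝ) ≤ s - ρ) (by linarith : (0:ℝ) ≤ (γ + 1) * ρ - d))]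
  · nlinarith [sq_nonneg ((γ + 1) * s - d), mul_nonneg hγ (sq_nonneg ((γ + 1) * s - d))]

end Huber

section Geometry

variable {H : Type*} [NormedAddCommGroup H] {C : Set H}

lemma infDist_eq_dist_of_forall_dist_le {x c : H} (hc : c ∈ C)
    (hmin : ∀ y ∈ C, dist x c ≤ dist x y) : infDist x C = dist x c :=
  le_antisymm (infDist_le_dist_of_mem hc) ((le_infDist ⟨c, hc⟩).2 hmin)

variable [NormedSpace ℝ H]

lemma Convex.infDist_midpoint_le (hC : Convex ℝ C) {a b : H} (ha : a ∈ C) (hb : b ∈ C)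
    (p q : H) : infDist (midpoint ℝ p q) C ≤ (dist p a + dist q b) / 2 :=
  (infDist_le_dist_of_mem (hC.midpoint_mem ha hb)).trans (dist_midpoint_midpoint_le p q a b)

lemma infDist_add_smul_sub_of_forall_dist_le {x c : H} (hc : c ∈ C)
    (hmin : ∀ y ∈ C, dist x c ≤ dist x y) {t : ℝ} (ht0 : 0 ≤ t) (ht1 : t ≤ 1) :
    infDist (x + t • (c - x)) C = (1 - t) * infDist x C := by
  rw [infDist_eq_dist_of_forall_dist_le hc hmin]
  have hz : x + t • (c - x) = AffineMap.lineMap x c t := by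
    rw [AffineMap.lineMap_apply_module', add_comm]
  have hxz : dist x (x + t • (c - x)) = t * dist x c := by
    rw [dist_comm, hz, dist_lineMap_left, Real.norm_of_nonneg ht0]
  refine le_antisymm ?_ ?_
  · calc infDist (x + t • (c - x)) C ≤ dist (x + t • (c - x)) c := infDist_le_dist_of_mem hc
      _ = (1 - t) * dist x c := by
        rw [hz, dist_lineMap_right, Real.norm_of_nonneg (by linarith)]
  · have htri := infDist_le_infDist_add_dist (x := x) (y := x + t • (c - x)) (s := C)
    rw [infDist_eq_dist_of_forall_dist_le hc hmin, hxz] at htri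
    linarith

lemma Convex.huber_infDist_midpoint_le {ρ : ℝ} (hρ : 0 ≤ ρ) (hC : Convex ℝ C) {projC : H → H}
    (hproj : ∀ x, projC x ∈ C ∧ ∀ y ∈ C, dist x (projC x) ≤ dist x y) (p q : H) :
    huber ρ (infDist (midpoint ℝ p q) C) ≤ (huber ρ (infDist p C) + huber ρ (infDist q C)) / 2 := by
  rw [infDist_eq_dist_of_forall_dist_le (hproj p).1 (hproj p).2,
    infDist_eq_dist_of_forall_dist_le (hproj q).1 (hproj q).2]
  exact (huber_mono hρ infDist_nonneg (hC.infDist_midpoint_le (hproj p).1 (hproj q).1 p q)).trans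
    (huber_midpoint_le _ _)

lemma isMinOn_comp_infDist_add_half_norm_sq {g : ℝ → ℝ} {x c : H} (hc : c ∈ C)
    (hmin : ∀ y ∈ C, dist x c ≤ dist x y) {t : ℝ} (ht0 : 0 ≤ t) (ht1 : t ≤ 1)
    (hg : IsMinOn (fun s => g s + (infDist x C - s) ^ 2 / 2) univ ((1 - t) * infDist x C)) :
    IsMinOn (fun y => g (infDist y C) + ‖x - y‖ ^ 2 / 2) univ (x + t • (c - x)) := by
  intro y _
  have hxz : ‖x - (x + t • (c - x))‖ = infDist x C - (1 - t) * infDist x C := by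
    rw [sub_add_cancel_left, norm_neg, norm_smul, Real.norm_of_nonneg ht0, ← dist_eq_norm',
      infDist_eq_dist_of_forall_dist_le hc hmin]
    ring
  have hy : (infDist x C - infDist y C) ^ 2 ≤ ‖x - y‖ ^ 2 := by
    have hxy : infDist x C ≤ infDist y C + dist x y := infDist_le_infDist_add_dist
    have hyx : infDist y C ≤ infDist x C + dist x y := dist_comm y x ▸ infDist_le_infDist_add_dist
    rw [← dist_eq_norm]
    exact sq_le_sq' (by linarith) (by linarith)
  simp only [mem_ofPred_eq]
  rw [infDist_add_smul_sub_of_forall_dist_le hc hmin ht0 ht1, hxz]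
  have hgy := isMinOn_univ_iff.1 hg (infDist y C)
  linarith

end Geometry

lemma eq_of_isMinOn_add_half_norm_sq {H : Type*} [NormedAddCommGroup H] [InnerProductSpace ℝ H]
    {f : H → ℝ} {x p q : H} (hf : f (midpoint ℝ p q) ≤ (f p + f q) / 2)
    (hp : IsMinOn (fun y => f y + ‖x - y‖ ^ 2 / 2) univ p)
    (hq : IsMinOn (fun y => f y + ‖x - y‖ ^ 2 / 2) univ q) : p = q := by
  have hpm := hp (mem_univ (midpoint ℝ p q))
  have hqm := hq (mem_univ (midpoint ℝ p q))
  simp only [mem_ofPred_eq, ← dist_eq_norm] at hpm hqm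
  have hapollonius := EuclideanGeometry.dist_sq_add_dist_sq_eq_two_mul_dist_midpoint_sq_add_half_dist_sq x p q
  exact dist_le_zero.1 (by nlinarith [sq_nonneg (dist p q)])

theorem stmt_9_general {H : Type*} [NormedAddCommGroup H] [InnerProductSpace ℝ H]
    (C : Set H) (hCconv : Convex ℝ C)
    (ρ : ℝ) (hρ : 0 < ρ)
    (h : H → ℝ)
    (hdef : ∀ x, h x = if ρ < Metric.infDist x C
      then ρ * Metric.infDist x C - ρ ^ 2 / 2 else (Metric.infDist x C) ^ 2 / 2)
    (projC : H → H)
    (hproj : ∀ x, projC x ∈ C ∧ ∀ y ∈ C, dist x (projC x) ≤ dist x y)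
    (γ : ℝ) (hγ : 0 < γ) (x : H)
    -- `p = prox_{γh} x` :
    (p : H)
    (hp : ∀ y : H, γ * h p + ‖x - p‖ ^ 2 / 2 ≤ γ * h y + ‖x - y‖ ^ 2 / 2) :
    ((γ + 1) * ρ < Metric.infDist x C →
      p = x + (γ * ρ / Metric.infDist x C) • (projC x - x)) ∧
    (Metric.infDist x C ≤ (γ + 1) * ρ →
      p = (1 / (γ + 1)) • (x + γ • projC x)) := by
  obtain rfl : h = fun y => huber ρ (infDist y C) := funext hdef
  have hconv (q : H) : γ * huber ρ (infDist (midpoint ℝ p q) C)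
      ≤ (γ * huber ρ (infDist p C) + γ * huber ρ (infDist q C)) / 2 := by
    rw [← mul_add, mul_div_assoc]
    exact mul_le_mul_of_nonneg_left (hCconv.huber_infDist_midpoint_le hρ.le hproj p q) hγ.le
  have hprox {t : ℝ} (ht0 : 0 ≤ t) (ht1 : t ≤ 1) (hmin : IsMinOn
      (fun s => γ * huber ρ s + (infDist x C - s) ^ 2 / 2) univ ((1 - t) * infDist x C)) :
      p = x + t • (projC x - x) :=
    eq_of_isMinOn_add_half_norm_sq (hconv _) (isMinOn_univ_iff.2 hp)
      (isMinOn_comp_infDist_add_half_norm_sq (hproj x).1 (hproj x).2 ht0 ht1 hmin)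
  refine ⟨fun hd => ?_, fun hd => ?_⟩
  · have hd0 : 0 < infDist x C := lt_trans (by positivity) hd
    refine hprox (by positivity) ((div_le_one hd0).2 (by nlinarith)) ?_
    convert isMinOn_huber_prox_of_lt hγ.le hd using 1
    field_simp
  · rw [show (1 / (γ + 1)) • (x + γ • projC x) = x + (γ / (γ + 1)) • (projC x - x) by
      match_scalars <;> grind]
    refine hprox (by positivity) ((div_le_one (by positivity)).2 (by linarith)) ?_
    convert isMinOn_huber_prox_of_le hγ.le hd using 1
    field_simp
    ring

/-- With the abstract Huber function `h` of Statement 8, `γ > 0` and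
`x ∈ H`:  `prox_{γh} x = x + (γρ/d_C x) • (proj_C x − x)` if `d_C x > (γ+1)ρ`, and
`prox_{γh} x = (1/(γ+1)) • (x + γ • proj_C x)` if `d_C x ≤ (γ+1)ρ`. -/
theorem stmt_9 {H : Type*} [NormedAddCommGroup H] [InnerProductSpace ℝ H] [CompleteSpace H]
    (C : Set H) (hCne : C.Nonempty) (hCclosed : IsClosed C) (hCconv : Convex ℝ C)
    (ρ : ℝ) (hρ : 0 < ρ)
    (h : H → ℝ)
    (hdef : ∀ x, h x = if ρ < Metric.infDist x C
      then ρ * Metric.infDist x C - ρ ^ 2 / 2 else (Metric.infDist x C) ^ 2 / 2)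
    (projC : H → H)
    (hproj : ∀ x, projC x ∈ C ∧ ∀ y ∈ C, dist x (projC x) ≤ dist x y)
    (γ : ℝ) (hγ : 0 < γ) (x : H)
    -- `p = prox_{γh} x` :
    (p : H)
    (hp : ∀ y : H, γ * h p + ‖x - p‖ ^ 2 / 2 ≤ γ * h y + ‖x - y‖ ^ 2 / 2) :
    ((γ + 1) * ρ < Metric.infDist x C →
      p = x + (γ * ρ / Metric.infDist x C) • (projC x - x)) ∧
    (Metric.infDist x C ≤ (γ + 1) * ρ →
      p = (1 / (γ + 1)) • (x + γ • projC x)) :=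
  stmt_9_general C hCconv ρ hρ h hdef projC hproj γ hγ x p hp
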